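/- Let 𝔰 be ℝ⁷ with the Lie bracket determined by [e₁,e₃] = −e₅, [e₂,e₄] = e₅, [e₁,e₄] = −e₆, [e₂,e₃] = −e₆, [e₇,eᵢ] = (1/2)eᵢ for i = 1,2,3,4, [e₇,e₅] = e₅, [e₇,e₆] = e₆ (all other basis brackets zero), and let φ be the alternating 3-form φ = e¹²⁷ + e³⁴⁷ − e⁵⁶⁷ + e¹³⁶ − e¹⁴⁵ − e²³⁵ − e²⁴⁶ on 𝔰. Then the Chevalley–Eilenberg differential of φ satisfies dφ = −e⁷ ∧ φ; that is, for all x, y, z, w ∈ ℝ⁷: −φ([x,y],z,w) + φ([x,z],y,w) − φ([x,w],y,z) − φ([y,z],x,w) + φ([y,w],x,z) − φ([z,w],x,y) = −(e⁷(x)φ(y,z,w) − e⁷(y)φ(x,z,w) + e⁷(z)φ(x,y,w) − e⁷(w)φ(x,y,z)). (This is the locally conformal calibrated condition dφ = 3τ₁ ∧ φ with τ₁ = −(1/3)e⁷.) -/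
import Mathlib


noncomputable section

/-- The bracket of the solvable Lie algebra `𝔰 = 𝔫₂₈ ⊕_D ℝe₇` on `ℝ⁷` (0-based indices). -/
def br7 (x y : Fin 7 → ℝ) : Fin 7 → ℝ :=
  ![(1 / 2) * (x 6 * y 0 - x 0 * y 6),
    (1 / 2) * (x 6 * y 1 - x 1 * y 6),
    (1 / 2) * (x 6 * y 2 - x 2 * y 6),
    (1 / 2) * (x 6 * y 3 - x 3 * y 6),
    -(x 0 * y 2 - x 2 * y 0) + (x 1 * y 3 - x 3 * y 1) + (x 6 * y 4 - x 4 * y 6),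
    -(x 0 * y 3 - x 3 * y 0) - (x 1 * y 2 - x 2 * y 1) + (x 6 * y 5 - x 5 * y 6),
    0]

/-- The evaluation of `eᵃ∧eᵇ∧eᶜ` on `(x,y,z)` for vectors of `ℝ⁷`. -/
def tripleDet7 (x y z : Fin 7 → ℝ) (a b c : Fin 7) : ℝ :=
  Matrix.det !![x a, x b, x c; y a, y b, y c; z a, z b, z c]

/-- The 3-form `φ = e¹²⁷ + e³⁴⁷ − e⁵⁶⁷ + e¹³⁶ − e¹⁴⁵ − e²³⁵ − e²⁴⁶` on `ℝ⁷`
(0-based indices). -/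
def phi7 (x y z : Fin 7 → ℝ) : ℝ :=
  tripleDet7 x y z 0 1 6 + tripleDet7 x y z 2 3 6 - tripleDet7 x y z 4 5 6 +
    tripleDet7 x y z 0 2 5 - tripleDet7 x y z 0 3 4 - tripleDet7 x y z 1 2 4 -
    tripleDet7 x y z 1 3 5

lemma br7_0 (x y : Fin 7 → ℝ) : br7 x y 0 = (1/2)*(x 6 * y 0 - x 0 * y 6) := rfl
lemma br7_1 (x y : Fin 7 → ℝ) : br7 x y 1 = (1/2)*(x 6 * y 1 - x 1 * y 6) := rfl
lemma br7_2 (x y : Fin 7 → ℝ) : br7 x y 2 = (1/2)*(x 6 * y 2 - x 2 * y 6) := rfl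
lemma br7_3 (x y : Fin 7 → ℝ) : br7 x y 3 = (1/2)*(x 6 * y 3 - x 3 * y 6) := rfl
lemma br7_4 (x y : Fin 7 → ℝ) : br7 x y 4 = -(x 0 * y 2 - x 2 * y 0) + (x 1 * y 3 - x 3 * y 1) + (x 6 * y 4 - x 4 * y 6) := rfl
lemma br7_5 (x y : Fin 7 → ℝ) : br7 x y 5 = -(x 0 * y 3 - x 3 * y 0) - (x 1 * y 2 - x 2 * y 1) + (x 6 * y 5 - x 5 * y 6) := rfl
lemma br7_6 (x y : Fin 7 → ℝ) : br7 x y 6 = 0 := rfl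

lemma det3_eval (x y z : Fin 7 → ℝ) (a b c : Fin 7) : tripleDet7 x y z a b c =
    x a * (y b * z c) - x a * (y c * z b) - x b * (y a * z c) + x b * (y c * z a)
      + x c * (y a * z b) - x c * (y b * z a) := by
  simp only [tripleDet7, Matrix.det_fin_three, Matrix.cons_val_zero, Matrix.cons_val_one,
    Matrix.head_cons, Matrix.cons_val_two, Matrix.tail_cons, Matrix.head_fin_const, Matrix.of_apply, Matrix.cons_val', Matrix.empty_val', Matrix.cons_val_fin_one]
  ring

set_option maxHeartbeats 8000000 in
/-- On the solvable Lie algebra `𝔰`, the Chevalley–Eilenberg differential of `φ` satisfies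
`dφ = −e⁷ ∧ φ` (the locally conformal calibrated condition `dφ = 3τ₁ ∧ φ` with
`τ₁ = −(1/3)e⁷`): for all `x, y, z, w ∈ ℝ⁷`,
`−φ([x,y],z,w) + φ([x,z],y,w) − φ([x,w],y,z) − φ([y,z],x,w) + φ([y,w],x,z) − φ([z,w],x,y)`
equals `−(e⁷(x)φ(y,z,w) − e⁷(y)φ(x,z,w) + e⁷(z)φ(x,y,w) − e⁷(w)φ(x,y,z))`. -/
theorem s7_locally_conformal_calibrated (x y z w : Fin 7 → ℝ) :
    -phi7 (br7 x y) z w + phi7 (br7 x z) y w - phi7 (br7 x w) y z -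
        phi7 (br7 y z) x w + phi7 (br7 y w) x z - phi7 (br7 z w) x y =
      -(x 6 * phi7 y z w - y 6 * phi7 x z w + z 6 * phi7 x y w - w 6 * phi7 x y z) := by
  simp only [phi7, det3_eval, br7_0, br7_1, br7_2, br7_3, br7_4, br7_5, br7_6]
  ring

end
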